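/- Let A ↪ X be a cofibration of directed graphs, ℓ ≥ 0, x ∈ X∖A, a ∈ A, and assume a ≠ π(x) or ℓ ≠ d(a,x). Then the complex A_{*,ℓ}(a,x) (spanned by tuples (x₀,...,x_k) of length ℓ with x₀=a, x_k=x, and intermediate entries in A) is acyclic; an explicit contracting homotopy is s(x₀,...,x_k) = (-1)^k(x₀,...,x_{k-1},π(x_k),x_k) if x_{k-1} ≠ π(x_k) and 0 otherwise. -/

import Mathlib

open scoped Classical

/-- A directed graph on a vertex type `V` (loops allowed, no parallel edges). -/
structure DGraph (V : Type) where
  Adj : V → V → Prop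

namespace DGraph
variable {V : Type}

/-- There is a directed path of length `n` (i.e. with `n` edges) from `x` to `y`. -/
def PathLen (G : DGraph V) (x y : V) (n : ℕ) : Prop :=
  ∃ f : ℕ → V, f 0 = x ∧ f n = y ∧ ∀ i < n, G.Adj (f i) (f (i + 1))

/-- The shortest path metric, with values in `ℕ∞ = ℕ ∪ {∞}`. -/
noncomputable def edist (G : DGraph V) (x y : V) : ℕ∞ :=
  sInf {n : ℕ∞ | ∃ m : ℕ, n = m ∧ G.PathLen x y m}

/-- The length of a tuple of vertices: the sum of consecutive distances. -/
noncomputable def tlen (G : DGraph V) {k : ℕ} (f : Fin (k + 1) → V) : ℕ∞ :=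
  ∑ i : Fin k, G.edist (f i.castSucc) (f i.succ)

/-- `y` is reachable from `x` by a directed path. -/
def Reaches (G : DGraph V) (x y : V) : Prop := Relation.ReflTransGen G.Adj x y

/-- The induced subgraph on a set of vertices. -/
def induce (G : DGraph V) (A : Set V) : DGraph A := ⟨fun a b => G.Adj a.1 b.1⟩

end DGraph

variable {V : Type}

/-- Validity of a tuple as a magnitude-chain basis element of degree `k` and length `ℓ`:
consecutive entries are distinct, at finite distance, and the total length is `ℓ`. -/
def MCValid (G : DGraph V) (k ℓ : ℕ) (f : Fin (k + 1) → V) : Prop :=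
  (∀ i : Fin k, G.edist (f i.castSucc) (f i.succ) ≠ 0 ∧ G.edist (f i.castSucc) (f i.succ) ≠ ⊤) ∧
    G.tlen f = (ℓ : ℕ∞)

/-- Basis of the magnitude chain group `MC_{k,ℓ}(G)`. -/
def MCb (G : DGraph V) (k ℓ : ℕ) : Type := {f : Fin (k + 1) → V // MCValid G k ℓ f}

/-- The magnitude chain group `MC_{k,ℓ}(G)` with coefficients in `R`. -/
abbrev MCMod (R : Type) [CommRing R] (G : DGraph V) (k ℓ : ℕ) := MCb G k ℓ →₀ R

/-- Deletion of the interior entry in position `j+1` of a `(k+2)`-tuple. -/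
def delMid {k : ℕ} (f : Fin (k + 2) → V) (j : Fin k) : Fin (k + 1) → V :=
  f ∘ (Fin.succAbove j.succ.castSucc)

/-- The magnitude-chain differential `MC_{k+1,ℓ}(G) → MC_{k,ℓ}(G)`: delete interior
entries with alternating signs, omitting any length-decreasing term. -/
noncomputable def dMC (R : Type) [CommRing R] (G : DGraph V) (k ℓ : ℕ) :
    MCMod R G (k + 1) ℓ →ₗ[R] MCMod R G k ℓ :=
  Finsupp.lsum R fun b => LinearMap.toSpanSingleton R _
    (∑ j : Fin k, (-1 : R) ^ ((j : ℕ) + 1) •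
      (if h : MCValid G k ℓ (delMid b.1 j) then
        Finsupp.single (⟨delMid b.1 j, h⟩ : MCb G k ℓ) (1 : R) else 0))

/-- The outgoing magnitude differential from degree `k` (zero in degree `0`). -/
noncomputable def dMCOut (R : Type) [CommRing R] (G : DGraph V) (ℓ : ℕ) :
    (k : ℕ) → MCMod R G k ℓ →ₗ[R] MCMod R G (k - 1) ℓ
  | 0 => 0
  | (k + 1) => dMC R G k ℓ

/-- Magnitude homology `MH_{k,ℓ}(G)` with coefficients in `R`. -/
noncomputable abbrev MH (R : Type) [CommRing R] (G : DGraph V) (k ℓ : ℕ) :=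
  letI : HasQuotient (LinearMap.ker (dMCOut R G ℓ k))
      (Submodule R (LinearMap.ker (dMCOut R G ℓ k))) :=
      Submodule.hasQuotient (R := R) (M := LinearMap.ker (dMCOut R G ℓ k))
  LinearMap.ker (dMCOut R G ℓ k) ⧸
    (LinearMap.range (dMCOut R G ℓ (k + 1))).comap (LinearMap.ker (dMCOut R G ℓ k)).subtype

/-- Embedding of the magnitude chains into the free module on all tuples of vertices. -/
noncomputable def eMC (R : Type) [CommRing R] (G : DGraph V) (k ℓ : ℕ) :
    MCMod R G k ℓ →ₗ[R] ((Fin (k + 1) → V) →₀ R) :=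
  Finsupp.lmapDomain R R Subtype.val

/-- Basis of a subcomplex of the magnitude chains, cut out by a predicate `P` on tuples
(assumed closed under the interior deletions appearing in the differential). -/
def RCb (G : DGraph V) (P : ∀ k, (Fin (k + 1) → V) → Prop) (k ℓ : ℕ) : Type :=
  {f : Fin (k + 1) → V // MCValid G k ℓ f ∧ P k f}

/-- The degree-`k`, length-`ℓ` chain group of the subcomplex cut out by `P`. -/
abbrev RMod (R : Type) [CommRing R] (G : DGraph V) (P : ∀ k, (Fin (k + 1) → V) → Prop)
    (k ℓ : ℕ) := RCb G P k ℓ →₀ R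

/-- The differential of the subcomplex cut out by `P`. -/
noncomputable def dR (R : Type) [CommRing R] (G : DGraph V)
    (P : ∀ k, (Fin (k + 1) → V) → Prop) (k ℓ : ℕ) :
    RMod R G P (k + 1) ℓ →ₗ[R] RMod R G P k ℓ :=
  Finsupp.lsum R fun b => LinearMap.toSpanSingleton R _
    (∑ j : Fin k, (-1 : R) ^ ((j : ℕ) + 1) •
      (if h : MCValid G k ℓ (delMid b.1 j) ∧ P k (delMid b.1 j) then
        Finsupp.single (⟨delMid b.1 j, h⟩ : RCb G P k ℓ) (1 : R) else 0))

/-- The outgoing differential of the subcomplex from degree `k` (zero in degree `0`). -/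
noncomputable def dROut (R : Type) [CommRing R] (G : DGraph V)
    (P : ∀ k, (Fin (k + 1) → V) → Prop) (ℓ : ℕ) :
    (k : ℕ) → RMod R G P k ℓ →ₗ[R] RMod R G P (k - 1) ℓ
  | 0 => 0
  | (k + 1) => dR R G P k ℓ

/-- The degree-`k`, length-`ℓ` homology of the subcomplex cut out by `P`. -/
noncomputable abbrev RH (R : Type) [CommRing R] (G : DGraph V)
    (P : ∀ k, (Fin (k + 1) → V) → Prop) (k ℓ : ℕ) :=
  letI : HasQuotient (LinearMap.ker (dROut R G P ℓ k))
      (Submodule R (LinearMap.ker (dROut R G P ℓ k))) :=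
      Submodule.hasQuotient (R := R) (M := LinearMap.ker (dROut R G P ℓ k))
  LinearMap.ker (dROut R G P ℓ k) ⧸
    (LinearMap.range (dROut R G P ℓ (k + 1))).comap (LinearMap.ker (dROut R G P ℓ k)).subtype

/-- Embedding of the subcomplex chains into the free module on all tuples of vertices. -/
noncomputable def eR (R : Type) [CommRing R] (G : DGraph V)
    (P : ∀ k, (Fin (k + 1) → V) → Prop) (k ℓ : ℕ) :
    RMod R G P k ℓ →ₗ[R] ((Fin (k + 1) → V) →₀ R) :=
  Finsupp.lmapDomain R R Subtype.val

/-- `A ⊆ V`, with projection `π`, is a cofibration in `G`: an induced subgraph inclusion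
with no edges from outside `A` into `A`, such that every vertex `x` in the reach of `A`
has a projection `π x ∈ A` with `d(a,x) = d(a,π x) + d(π x,x)` for all `a ∈ A`. -/
def IsCofib (G : DGraph V) (A : Set V) (π : V → V) : Prop :=
  (∀ u v : V, u ∉ A → v ∈ A → ¬ G.Adj u v) ∧
  (∀ x : V, (∃ a ∈ A, G.Reaches a x) →
    π x ∈ A ∧ ∀ a ∈ A, G.edist a x = G.edist a (π x) + G.edist (π x) x)

/-- The predicate cutting out the subcomplex `A_{*,ℓ}(a,x)` of `MC_{*,ℓ}(X)`: tuples
starting at `a`, ending at `x`, with all intermediate entries in `A`. -/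
def AP (A : Set V) (a x : V) : ∀ k, (Fin (k + 1) → V) → Prop :=
  fun k f => f 0 = a ∧ f (Fin.last k) = x ∧
    ∀ i : Fin (k + 1), i ≠ 0 → i ≠ Fin.last k → f i ∈ A

/-- The tuple `(x₀, ..., x_{k-1}, π(x_k), x_k)` obtained from `(x₀, ..., x_k)` by
inserting the projection of the last entry before it. -/
def sTuple (p : V → V) {k : ℕ} (f : Fin (k + 1) → V) : Fin (k + 2) → V :=
  fun i => if _h : (i : ℕ) < k then f ⟨i, by omega⟩
    else if (i : ℕ) = k then p (f (Fin.last k)) else f (Fin.last k)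

/-!
The homotopy inserts `π x` before the final entry `x`. Every tuple of `A_{*,ℓ}(a,x)` ends with
`…, u, x` where `u ∈ A`, so the cofibration identity `d(u,x) = d(u,π x) + d(π x,x)` makes
`(…, u, π x, x)` a tuple of the same length, valid exactly when `u ≠ π x`. In `∂s + s∂` the faces
of `s b` not touching the inserted entry cancel against `s∂ b`, and the face deleting it returns
`b`. When `u = π x` we have `s b = 0`, and instead the face of `∂ b` deleting `u` is sent back to
`b` by `s`; this breaks down only for `b = (a, x)` with `a = π x` and `ℓ = d(a,x)`. The
cofibration identity is available at `x` because a nonzero chain `(…, u, x)` puts `x` within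
finite distance of `u ∈ A`.
-/

namespace DGraph

variable (G : DGraph V)

theorem edist_eq_zero_iff {u v : V} : G.edist u v = 0 ↔ u = v := by
  constructor
  · intro h
    by_contra hne
    have : (1 : ℕ∞) ≤ G.edist u v := by
      refine le_sInf ?_
      rintro _ ⟨m, rfl, f, hf0, hfm, -⟩
      rcases m with _ | m
      · exact absurd (hf0.symm.trans hfm) hne
      · exact_mod_cast m.succ_pos
    simp [h] at this
  · rintro rfl
    exact nonpos_iff_eq_zero.mp (sInf_le ⟨0, by simp, fun _ => u, rfl, rfl, by simp⟩)

theorem reaches_of_edist_ne_top {u v : V} (h : G.edist u v ≠ ⊤) : G.Reaches u v := by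
  obtain ⟨_, ⟨n, -, f, rfl, rfl, hf⟩, -⟩ :
      ∃ d ∈ {d : ℕ∞ | ∃ n : ℕ, d = n ∧ G.PathLen u v n}, d ≠ ⊤ := by
    by_contra! hall
    exact h (sInf_eq_top.mpr hall)
  suffices ∀ i ≤ n, G.Reaches (f 0) (f i) from this n le_rfl
  intro i hi
  induction i with
  | zero => exact .refl
  | succ i ih => exact (ih (by omega)).tail (hf i (by omega))

theorem tlen_snoc {k : ℕ} (f : Fin (k + 1) → V) (y : V) :
    G.tlen (Fin.snoc (α := fun _ => V) f y) = G.tlen f + G.edist (f (Fin.last k)) y := by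
  simp only [tlen, Fin.sum_univ_castSucc (n := k), Fin.succ_castSucc, Fin.snoc_castSucc,
    Fin.succ_last, Fin.snoc_last]

end DGraph

theorem ENat.add_ne_zero_ne_top_iff {m n : ℕ∞} (hn : n ≠ 0) :
    (m + n ≠ 0 ∧ m + n ≠ ⊤) ∧ m ≠ 0 ↔ (m ≠ 0 ∧ m ≠ ⊤) ∧ (n ≠ 0 ∧ n ≠ ⊤) := by
  simp only [ne_eq, add_eq_zero, ENat.add_eq_top]
  tauto

section Tuples

theorem forall_snoc_castSucc_succ_iff {k : ℕ} (C : V → V → Prop) (f : Fin (k + 1) → V) (y : V) :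
    (∀ i : Fin (k + 1),
      C (Fin.snoc (α := fun _ => V) f y i.castSucc) (Fin.snoc (α := fun _ => V) f y i.succ)) ↔
      (∀ i : Fin k, C (f i.castSucc) (f i.succ)) ∧ C (f (Fin.last k)) y := by
  simp only [Fin.forall_fin_succ' (n := k), Fin.succ_castSucc, Fin.snoc_castSucc, Fin.succ_last,
    Fin.snoc_last]

theorem mcValid_snoc_iff {G : DGraph V} {k ℓ : ℕ} (f : Fin (k + 1) → V) (y : V) :
    MCValid G (k + 1) ℓ (Fin.snoc (α := fun _ => V) f y) ↔
      (∀ i : Fin k,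
        G.edist (f i.castSucc) (f i.succ) ≠ 0 ∧ G.edist (f i.castSucc) (f i.succ) ≠ ⊤) ∧
      (G.edist (f (Fin.last k)) y ≠ 0 ∧ G.edist (f (Fin.last k)) y ≠ ⊤) ∧
      G.tlen f + G.edist (f (Fin.last k)) y = ℓ := by
  simp only [MCValid, forall_snoc_castSucc_succ_iff (fun u v => G.edist u v ≠ 0 ∧ G.edist u v ≠ ⊤),
    DGraph.tlen_snoc, and_assoc]

theorem sTuple_eq_snoc (p : V → V) {k : ℕ} (f : Fin (k + 1) → V) :
    sTuple p f = Fin.snoc (Fin.snoc (Fin.init f) (p (f (Fin.last k)))) (f (Fin.last k)) := by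
  funext i
  simp only [sTuple, Fin.snoc, Fin.init, Fin.val_castLT]
  split_ifs <;> first | rfl | omega

theorem delMid_apply {k : ℕ} (f : Fin (k + 2) → V) (j : Fin k) (i : Fin (k + 1)) :
    delMid f j i = if (i : ℕ) ≤ j then f i.castSucc else f i.succ := by
  simp only [delMid, Function.comp_apply, Fin.succAbove, Fin.lt_def]
  simp [apply_ite f]

theorem delMid_sTuple_castSucc (p : V → V) {k : ℕ} (f : Fin (k + 2) → V) (j : Fin k) :
    delMid (sTuple p f) j.castSucc = sTuple p (delMid f j) := by
  funext i
  simp only [delMid_apply, sTuple, Fin.val_castSucc, Fin.val_succ, Fin.val_last]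
  split_ifs <;> first | omega | rfl

theorem delMid_sTuple_last (p : V → V) {k : ℕ} (f : Fin (k + 2) → V) :
    delMid (sTuple p f) (Fin.last k) = f := by
  funext i
  simp only [delMid_apply, sTuple, Fin.val_castSucc, Fin.val_succ, Fin.val_last]
  split_ifs <;> first | omega | rfl | (congr 1; ext; simp; omega)

theorem sTuple_delMid_last (p : V → V) {k : ℕ} (f : Fin (k + 3) → V)
    (h : f (Fin.last (k + 1)).castSucc = p (f (Fin.last (k + 2)))) :
    sTuple p (delMid f (Fin.last k)) = f := by
  funext i
  simp only [delMid_apply, sTuple, Fin.val_last, Fin.succ_last]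
  split_ifs <;>
    first | omega | rfl | (congr 1; ext; simp; omega) | (rw [← h]; congr 1; ext; simp; omega)

theorem delMid_castSucc_apply_castSucc_last {k : ℕ} (f : Fin (k + 3) → V) (j : Fin k) :
    delMid f j.castSucc (Fin.last k).castSucc = f (Fin.last (k + 1)).castSucc := by
  rw [delMid_apply, if_neg (by simp)]
  rfl

theorem mcValid_sTuple_iff {G : DGraph V} {p : V → V} {k ℓ : ℕ} {f : Fin (k + 2) → V}
    (hp : p (f (Fin.last (k + 1))) ≠ f (Fin.last (k + 1)))
    (hsplit : G.edist (f (Fin.last k).castSucc) (f (Fin.last (k + 1))) =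
      G.edist (f (Fin.last k).castSucc) (p (f (Fin.last (k + 1)))) +
        G.edist (p (f (Fin.last (k + 1)))) (f (Fin.last (k + 1)))) :
    MCValid G (k + 2) ℓ (sTuple p f) ↔
      MCValid G (k + 1) ℓ f ∧ f (Fin.last k).castSucc ≠ p (f (Fin.last (k + 1))) := by
  have hne : f (Fin.last k).castSucc ≠ p (f (Fin.last (k + 1))) ↔
      G.edist (f (Fin.last k).castSucc) (p (f (Fin.last (k + 1)))) ≠ 0 :=
    G.edist_eq_zero_iff.not.symm
  have hf := mcValid_snoc_iff (G := G) (ℓ := ℓ) (Fin.init f) (f (Fin.last (k + 1)))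
  rw [Fin.snoc_init_self] at hf
  rw [hne, hf, sTuple_eq_snoc, mcValid_snoc_iff]
  simp only [forall_snoc_castSucc_succ_iff (fun u v => G.edist u v ≠ 0 ∧ G.edist u v ≠ ⊤),
    DGraph.tlen_snoc, Fin.snoc_last]
  rw [show Fin.init f (Fin.last k) = f (Fin.last k).castSucc from rfl, hsplit,
    add_assoc (G.tlen _)]
  have := ENat.add_ne_zero_ne_top_iff
    (m := G.edist (f (Fin.last k).castSucc) (p (f (Fin.last (k + 1)))))
    (mt G.edist_eq_zero_iff.mp hp)
  tauto

end Tuples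

section Subcomplex

variable {G : DGraph V} {A : Set V} {π : V → V} {a x : V}

theorem not_AP_zero (ha : a ∈ A) (hx : x ∉ A) (f : Fin 1 → V) : ¬AP A a x 0 f :=
  fun ⟨h0, hl, _⟩ => hx (hl ▸ h0 ▸ ha)

theorem AP.apply_castSucc_last_mem (ha : a ∈ A) {k : ℕ} {f : Fin (k + 2) → V}
    (hf : AP A a x (k + 1) f) : f (Fin.last k).castSucc ∈ A := by
  rcases k.eq_zero_or_pos with rfl | hk
  · exact hf.1 ▸ ha
  · exact hf.2.2 _ (Fin.ext_iff.not.mpr (by simp; omega)) (Fin.castSucc_ne_last _)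

theorem AP.delMid {k : ℕ} {f : Fin (k + 2) → V} (hf : AP A a x (k + 1) f) (j : Fin k) :
    AP A a x k (delMid f j) := by
  obtain ⟨h0, hl, hA⟩ := hf
  refine ⟨?_, ?_, fun i hi0 hil => ?_⟩
  · simpa [delMid_apply] using h0
  · rwa [delMid_apply, if_neg (by simp), Fin.succ_last]
  · rw [← Fin.val_ne_iff, Fin.val_zero] at hi0
    rw [← Fin.val_ne_iff, Fin.val_last] at hil
    rw [delMid_apply]
    split_ifs
    · exact hA _ (Fin.ne_of_val_ne (by simpa using hi0)) (Fin.ext_iff.not.mpr (by simp; omega))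
    · exact hA _ (Fin.succ_ne_zero _) (Fin.ext_iff.not.mpr (by simp; omega))

theorem AP.sTuple_of_proj_mem (hπ : π x ∈ A) {k : ℕ} {f : Fin (k + 2) → V}
    (hf : AP A a x (k + 1) f) : AP A a x (k + 2) (sTuple π f) := by
  obtain ⟨h0, hl, hA⟩ := hf
  refine ⟨by simpa [sTuple] using h0, by simpa [sTuple] using hl, fun i hi0 hil => ?_⟩
  rw [← Fin.val_ne_iff, Fin.val_zero] at hi0
  rw [← Fin.val_ne_iff, Fin.val_last] at hil
  simp only [sTuple]
  split_ifs
  · exact hA _ (Fin.ne_of_val_ne (by simpa using hi0)) (Fin.ext_iff.not.mpr (by simp; omega))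
  · exact hl ▸ hπ
  · omega

theorem AP.reaches (ha : a ∈ A) {k ℓ : ℕ} {f : Fin (k + 2) → V} (hf : AP A a x (k + 1) f)
    (hv : MCValid G (k + 1) ℓ f) : ∃ a' ∈ A, G.Reaches a' x :=
  ⟨_, hf.apply_castSucc_last_mem ha,
    hf.2.1 ▸ G.reaches_of_edist_ne_top (hv.1 (Fin.last k)).2⟩

theorem AP.mcValid_sTuple_iff (hco : IsCofib G A π) (ha : a ∈ A) (hx : x ∉ A)
    (hreach : ∃ a' ∈ A, G.Reaches a' x) {k ℓ : ℕ} {f : Fin (k + 2) → V}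
    (hf : AP A a x (k + 1) f) :
    MCValid G (k + 2) ℓ (sTuple π f) ∧ AP A a x (k + 2) (sTuple π f) ↔
      MCValid G (k + 1) ℓ f ∧ f (Fin.last k).castSucc ≠ π x := by
  obtain ⟨hπ, hsplit⟩ := hco.2 x hreach
  have hl : f (Fin.last (k + 1)) = x := hf.2.1
  have := _root_.mcValid_sTuple_iff (G := G) (ℓ := ℓ) (p := π) (f := f)
    (hl ▸ ne_of_mem_of_not_mem hπ hx) (hl ▸ hsplit _ (hf.apply_castSucc_last_mem ha))
  rw [hl] at this
  simp only [this, hf.sTuple_of_proj_mem hπ, and_true]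

theorem eq_edist_of_AP_one {ℓ : ℕ} {f : Fin 2 → V} (hf : AP A a x 1 f)
    (hv : MCValid G 1 ℓ f) : (ℓ : ℕ∞) = G.edist a x := by
  rw [← hv.2, DGraph.tlen, Fin.sum_univ_one, ← hf.1, ← hf.2.1]
  rfl

end Subcomplex

section Chains

variable (R : Type) [CommRing R] (G : DGraph V) (P : ∀ k, (Fin (k + 1) → V) → Prop)

noncomputable def tupleChain {k : ℕ} (ℓ : ℕ) (f : Fin (k + 1) → V) : RMod R G P k ℓ :=
  if h : MCValid G k ℓ f ∧ P k f then Finsupp.single (α := RCb G P k ℓ) ⟨f, h⟩ 1 else 0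

variable {R G P}

theorem tupleChain_of_valid {k ℓ : ℕ} {f : Fin (k + 1) → V} (h : MCValid G k ℓ f ∧ P k f) :
    tupleChain R G P ℓ f = Finsupp.single (α := RCb G P k ℓ) ⟨f, h⟩ 1 :=
  dif_pos h

theorem tupleChain_of_not_valid {k ℓ : ℕ} {f : Fin (k + 1) → V}
    (h : ¬(MCValid G k ℓ f ∧ P k f)) : tupleChain R G P ℓ f = 0 :=
  dif_neg h

theorem eR_tupleChain {k ℓ : ℕ} (f : Fin (k + 1) → V) :
    eR R G P k ℓ (tupleChain R G P ℓ f) =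
      if MCValid G k ℓ f ∧ P k f then Finsupp.single f 1 else 0 := by
  unfold tupleChain
  split_ifs
  · exact Finsupp.mapDomain_single
  · exact map_zero _

theorem dR_single {k ℓ : ℕ} (b : RCb G P (k + 1) ℓ) :
    dR R G P k ℓ (Finsupp.single b 1) =
      ∑ j : Fin k, (-1 : R) ^ ((j : ℕ) + 1) • tupleChain R G P ℓ (delMid b.1 j) := by
  simp only [dR, Finsupp.lsum_single, LinearMap.toSpanSingleton_apply, one_smul]
  rfl

theorem dR_tupleChain {k ℓ : ℕ} {f : Fin (k + 2) → V}
    (h : MCValid G (k + 1) ℓ f ∧ P (k + 1) f) :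
    dR R G P k ℓ (tupleChain R G P ℓ f) =
      ∑ j : Fin k, (-1 : R) ^ ((j : ℕ) + 1) • tupleChain R G P ℓ (delMid f j) := by
  rw [tupleChain_of_valid h]
  exact dR_single _

theorem RH_eq_zero_of_homotopy {ℓ : ℕ} (s : ∀ k, RMod R G P k ℓ →ₗ[R] RMod R G P (k + 1) ℓ)
    (h₀ : ∀ c, dR R G P 0 ℓ (s 0 c) = c)
    (hs : ∀ k c, dR R G P (k + 1) ℓ (s (k + 1) c) + s k (dR R G P k ℓ c) = c)
    (k : ℕ) (c : RH R G P k ℓ) : c = 0 := by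
  obtain ⟨⟨y, hy⟩, rfl⟩ := Submodule.Quotient.mk_surjective _ c
  rw [Submodule.Quotient.mk_eq_zero, Submodule.mem_comap]
  cases k with
  | zero => exact ⟨s 0 y, h₀ y⟩
  | succ k =>
    refine ⟨s (k + 1) y, ?_⟩
    have hy : dR R G P k ℓ y = 0 := hy
    change dR R G P (k + 1) ℓ _ = _
    simpa [hy] using hs k y

end Chains

section Homotopy

variable {R : Type} [CommRing R] {G : DGraph V}

theorem tupleChain_val {P : ∀ k, (Fin (k + 1) → V) → Prop} {k ℓ : ℕ} (b : RCb G P k ℓ) :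
    tupleChain R G P ℓ b.1 = Finsupp.single b 1 :=
  dif_pos b.2

variable (R G) in
/-- No case distinction is needed: when `x_{k-1} = π x_k` the tuple `sTuple π b` repeats an
entry, so `tupleChain` sends it to `0`. -/
noncomputable def projHomotopy (P : ∀ k, (Fin (k + 1) → V) → Prop) (π : V → V) (ℓ k : ℕ) :
    RMod R G P k ℓ →ₗ[R] RMod R G P (k + 1) ℓ :=
  Finsupp.linearCombination R fun b => (-1 : R) ^ k • tupleChain R G P ℓ (sTuple π b.1)

theorem projHomotopy_single {P : ∀ k, (Fin (k + 1) → V) → Prop} {π : V → V} {k ℓ : ℕ}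
    (b : RCb G P k ℓ) :
    projHomotopy R G P π ℓ k (Finsupp.single b 1) =
      (-1 : R) ^ k • tupleChain R G P ℓ (sTuple π b.1) := by
  rw [projHomotopy, Finsupp.linearCombination_single, one_smul]

variable {A : Set V} {π : V → V} {a x : V}

theorem projHomotopy_tupleChain (hco : IsCofib G A π) (ha : a ∈ A) (hx : x ∉ A)
    (hreach : ∃ a' ∈ A, G.Reaches a' x) {k ℓ : ℕ} {f : Fin (k + 1) → V}
    (hf : AP A a x k f) :
    projHomotopy R G (AP A a x) π ℓ k (tupleChain R G (AP A a x) ℓ f) =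
      (-1 : R) ^ k • tupleChain R G (AP A a x) ℓ (sTuple π f) := by
  cases k with
  | zero => exact absurd hf (not_AP_zero ha hx f)
  | succ k =>
    by_cases hv : MCValid G (k + 1) ℓ f
    · rw [tupleChain_of_valid ⟨hv, hf⟩]
      exact projHomotopy_single _
    · rw [tupleChain_of_not_valid (fun h => hv h.1), map_zero, tupleChain_of_not_valid
        (fun h => hv ((hf.mcValid_sTuple_iff hco ha hx hreach).mp h).1), smul_zero]

theorem eR_projHomotopy_single (hco : IsCofib G A π) (ha : a ∈ A) (hx : x ∉ A) {k ℓ : ℕ}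
    (b : RCb G (AP A a x) k ℓ) :
    eR R G (AP A a x) (k + 1) ℓ (projHomotopy R G (AP A a x) π ℓ k (Finsupp.single b 1)) =
      if b.1 ⟨k - 1, Nat.sub_lt_succ k 1⟩ ≠ π (b.1 (Fin.last k)) then
        (-1 : R) ^ k • Finsupp.single (sTuple π b.1) (1 : R)
      else 0 := by
  cases k with
  | zero => exact absurd b.2.2 (not_AP_zero ha hx b.1)
  | succ k =>
    obtain ⟨hv, hf⟩ := b.2
    have hiff := hf.mcValid_sTuple_iff (ℓ := ℓ) hco ha hx (hf.reaches ha hv)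
    rw [projHomotopy_single, map_smul, eR_tupleChain, hf.2.1,
      show (⟨k + 1 - 1, by omega⟩ : Fin (k + 2)) = (Fin.last k).castSucc from Fin.ext (by simp)]
    simp only [hiff, hv, true_and]
    split_ifs <;> simp

theorem dR_projHomotopy_add_projHomotopy_dR_single (hco : IsCofib G A π) (ha : a ∈ A)
    (hx : x ∉ A) {ℓ : ℕ} (hne : a ≠ π x ∨ (ℓ : ℕ∞) ≠ G.edist a x) {k : ℕ}
    (b : RCb G (AP A a x) (k + 1) ℓ) :
    dR R G (AP A a x) (k + 1) ℓ (projHomotopy R G (AP A a x) π ℓ (k + 1) (Finsupp.single b 1)) +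
      projHomotopy R G (AP A a x) π ℓ k (dR R G (AP A a x) k ℓ (Finsupp.single b 1)) =
        Finsupp.single b 1 := by
  obtain ⟨hv, hb⟩ := b.2
  have hreach := hb.reaches ha hv
  have hsd : projHomotopy R G (AP A a x) π ℓ k (dR R G (AP A a x) k ℓ (Finsupp.single b 1)) =
      (-1 : R) ^ k • ∑ j : Fin k,
        (-1 : R) ^ ((j : ℕ) + 1) • tupleChain R G (AP A a x) ℓ (sTuple π (delMid b.1 j)) := by
    simp only [dR_single, map_sum, map_smul, Finset.smul_sum,
      projHomotopy_tupleChain hco ha hx hreach (hb.delMid _)]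
    exact Finset.sum_congr rfl fun j _ => smul_comm _ _ _
  have hiff := hb.mcValid_sTuple_iff (ℓ := ℓ) hco ha hx hreach
  rw [projHomotopy_single, hsd]
  by_cases hlast : b.1 (Fin.last k).castSucc = π x
  · rw [tupleChain_of_not_valid (fun h => (hiff.mp h).2 hlast), smul_zero, map_zero, zero_add]
    cases k with
    | zero =>
      have hax : a = π x := hb.1 ▸ hlast
      exact absurd (eq_edist_of_AP_one hb hv) (hne.resolve_left (not_not.mpr hax))
    | succ k =>
      have hdeg (j : Fin k) :
          tupleChain R G (AP A a x) ℓ (sTuple π (delMid b.1 j.castSucc)) = 0 :=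
        tupleChain_of_not_valid fun h =>
          (((hb.delMid _).mcValid_sTuple_iff hco ha hx hreach).mp h).2
            ((delMid_castSucc_apply_castSucc_last b.1 j).trans hlast)
      rw [Fin.sum_univ_castSucc]
      simp only [hdeg, smul_zero, Finset.sum_const_zero, zero_add, Fin.val_last]
      rw [sTuple_delMid_last π b.1 (by rw [hb.2.1]; exact hlast), tupleChain_val, smul_smul,
        ← mul_pow]
      simp
  · rw [map_smul, dR_tupleChain (hiff.mpr ⟨hv, hlast⟩), Fin.sum_univ_castSucc]
    simp only [delMid_sTuple_castSucc, delMid_sTuple_last, Fin.val_castSucc, Fin.val_last,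
      tupleChain_val]
    have hsq : ((-1 : R) ^ k) * (-1) ^ k = 1 := by rw [← mul_pow]; simp
    linear_combination (norm := module) hsq • Finsupp.single b (1 : R)

theorem dR_projHomotopy_add_projHomotopy_dR (hco : IsCofib G A π) (ha : a ∈ A) (hx : x ∉ A)
    {ℓ : ℕ} (hne : a ≠ π x ∨ (ℓ : ℕ∞) ≠ G.edist a x) (k : ℕ)
    (c : RMod R G (AP A a x) (k + 1) ℓ) :
    dR R G (AP A a x) (k + 1) ℓ (projHomotopy R G (AP A a x) π ℓ (k + 1) c) +
      projHomotopy R G (AP A a x) π ℓ k (dR R G (AP A a x) k ℓ c) = c := by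
  suffices h : (dR R G (AP A a x) (k + 1) ℓ).comp (projHomotopy R G (AP A a x) π ℓ (k + 1)) +
      (projHomotopy R G (AP A a x) π ℓ k).comp (dR R G (AP A a x) k ℓ) = LinearMap.id from
    LinearMap.congr_fun h c
  refine Finsupp.lhom_ext' fun b => LinearMap.ext_ring ?_
  simpa using dR_projHomotopy_add_projHomotopy_dR_single hco ha hx hne b

end Homotopy

/-- let `A ↪ X` be a cofibration, `x ∉ A` in the reach of `A`, `a ∈ A`,
and assume `a ≠ π x` or `ℓ ≠ d(a,x)`.  Then `A_{*,ℓ}(a,x)` is acyclic, with explicit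
contracting homotopy `s(x₀,...,x_k) = (-1)^k (x₀,...,x_{k-1},π(x_k),x_k)` if
`x_{k-1} ≠ π(x_k)` and `0` otherwise. -/
theorem cofib_subcomplex_acyclic (R : Type) [CommRing R] (G : DGraph V) (A : Set V)
    (π : V → V) (hco : IsCofib G A π) (x : V) (hx : x ∉ A)
    (a : V) (ha : a ∈ A) (ℓ : ℕ)
    (hne : a ≠ π x ∨ (ℓ : ℕ∞) ≠ G.edist a x) :
    (∃ s : ∀ k, RMod R G (AP A a x) k ℓ →ₗ[R] RMod R G (AP A a x) (k + 1) ℓ,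
      -- `s` is given on basis elements by the stated formula:
      (∀ k (b : RCb G (AP A a x) k ℓ),
        eR R G (AP A a x) (k + 1) ℓ (s k (Finsupp.single b 1)) =
          if b.1 ⟨k - 1, by omega⟩ ≠ π (b.1 (Fin.last k)) then
            (-1 : R) ^ k • Finsupp.single (sTuple π b.1) (1 : R)
          else 0) ∧
      -- `s` is a contracting homotopy: `∂s + s∂ = Id`:
      (∀ c : RMod R G (AP A a x) 0 ℓ, dR R G (AP A a x) 0 ℓ (s 0 c) = c) ∧
      (∀ k (c : RMod R G (AP A a x) (k + 1) ℓ),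
        dR R G (AP A a x) (k + 1) ℓ (s (k + 1) c) + s k (dR R G (AP A a x) k ℓ c) = c)) ∧
    -- hence the complex is acyclic:
    (∀ k (c : RH R G (AP A a x) k ℓ), c = 0) := by
  have : IsEmpty (RCb G (AP A a x) 0 ℓ) := ⟨fun b => not_AP_zero ha hx b.1 b.2.2⟩
  have h₀ (c : RMod R G (AP A a x) 0 ℓ) :
      dR R G (AP A a x) 0 ℓ (projHomotopy R G (AP A a x) π ℓ 0 c) = c :=
    Subsingleton.elim _ _
  have hs := dR_projHomotopy_add_projHomotopy_dR (R := R) hco ha hx hne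
  exact ⟨⟨projHomotopy R G (AP A a x) π ℓ, fun _ => eR_projHomotopy_single hco ha hx, h₀, hs⟩,
    RH_eq_zero_of_homotopy _ h₀ hs⟩
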